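/- Let (A, R, D) be a strongly consistent EAFC and ADF^EAFC its corresponding ADF. A conflict-free set of arguments X ⊆ A defends an argument a ∈ A in (A, R, D) if and only if a is decisively in w.r.t. the partially acyclic range v_X^p of X in ADF^EAFC. -/

import Mathlib

open Classical

universe u

namespace Dialectical

variable {α : Type u}

/-! ### Two-valued (partial) interpretations -/

/-- A partial two-valued interpretation: `some true` = t, `some false` = f, `none` = undefined. -/
abbrev Interp (α : Type u) := α → Option Bool

/-- The domain of an interpretation. -/
def idom (v : Interp α) : Set α := {a | v a ≠ none}

/-- The set of arguments mapped to t. -/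
def tset (v : Interp α) : Set α := {a | v a = some true}

/-- The set of arguments mapped to f. -/
def fset (v : Interp α) : Set α := {a | v a = some false}

/-- `w` is a completion of `v` to the set `Z`. -/
def Completion (v w : Interp α) (Z : Set α) : Prop :=
  idom w = Z ∧ ∀ a ∈ idom v, w a = v a

/-- The interpretation assigning t on `T` and f on `F' \ T`. -/
noncomputable def mkInterp (T F' : Set α) : Interp α :=
  fun a => if a ∈ T then some true else if a ∈ F' then some false else none

/-! ### Abstract dialectical frameworks -/

/-- An abstract dialectical framework: links and acceptance conditions
(`true` = in, `false` = out). -/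
structure ADF (α : Type u) where
  L : α → α → Prop
  C : α → Set α → Bool

namespace ADF

variable (D : ADF α)

/-- The parents of an argument. -/
def par (a : α) : Set α := {p | D.L p a}

/-- Evaluating the acceptance condition of `s` under an interpretation. -/
def evalCond (s : α) (w : Interp α) : Bool := D.C s (tset w ∩ D.par s)

/-- `s` is decisively in w.r.t. `v`. -/
def DecisivelyIn (v : Interp α) (s : α) : Prop :=
  ∀ w : Interp α, Completion v w (idom v ∪ D.par s) → D.evalCond s w = true

/-- `s` is decisively out w.r.t. `v`. -/
def DecisivelyOut (v : Interp α) (s : α) : Prop :=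
  ∀ w : Interp α, Completion v w (idom v ∪ D.par s) → D.evalCond s w = false

/-- `v` is a minimal decisively in interpretation for `s` (`v ∈ min_dec(in,s)`). -/
def MinDecIn (v : Interp α) (s : α) : Prop :=
  D.DecisivelyIn v s ∧
  ∀ w : Interp α, D.DecisivelyIn w s → tset w ⊆ tset v → fset w ⊆ fset v →
    tset w = tset v ∧ fset w = fset v

/-- `pd` is a positive dependency function on `X`. -/
def PDFun (X : Set α) (pd : α → Option (Interp α)) : Prop :=
  ∀ a ∈ X,
    (∀ v, pd a = some v → D.MinDecIn v a ∧ tset v ⊆ X) ∧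
    (pd a = none → ¬ ∃ v, D.MinDecIn v a ∧ tset v ⊆ X)

end ADF

/-- The subset of `X` on which `pd` is non-null. -/
def soundDom (X : Set α) (pd : α → Option (Interp α)) : Set α :=
  {a ∈ X | pd a ≠ none}

namespace ADF
variable (D : ADF α)

/-- `pd` is a maximally sound pd-function of `X`. -/
def MaxSound (X : Set α) (pd : α → Option (Interp α)) : Prop :=
  D.PDFun X pd ∧
  ¬ ∃ (X'' : Set α) (pd' : α → Option (Interp α)),
      D.PDFun X'' pd' ∧ (∀ a ∈ X'', pd' a ≠ none) ∧
      soundDom X pd ⊂ X'' ∧ X'' ⊆ X ∧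
      ∀ a ∈ soundDom X pd, pd' a = pd a

end ADF

/-- The t-part of the interpretation assigned by `pd` to `a`. -/
def pdT (pd : α → Option (Interp α)) (a : α) : Set α :=
  {b | ∃ v, pd a = some v ∧ b ∈ tset v}

/-- The f-part of the interpretation assigned by `pd` to `a`. -/
def pdF (pd : α → Option (Interp α)) (a : α) : Set α :=
  {b | ∃ v, pd a = some v ∧ b ∈ fset v}

namespace ADF

variable (D : ADF α)

end ADF

/-- `(Fs, G, B)` is a partially acyclic positive dependency evaluation for `x`
based on the pd-function `pd` of `X`. -/
def IsPAEvalWith (pd : α → Option (Interp α)) (X : Set α)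
    (x : α) (Fs : Set α) (G : List α) (B : Set α) : Prop :=
  (∀ a ∈ G, a ∉ Fs) ∧ G.Nodup ∧
  x ∈ X ∧ Fs ⊆ X ∧ (∀ a ∈ G, a ∈ X) ∧
  (∀ a ∈ Fs, pd a ≠ none) ∧ (∀ a ∈ G, pd a ≠ none) ∧
  (G = [] → x ∈ Fs) ∧ (G ≠ [] → G.getLast? = some x) ∧
  (∀ i : ℕ, ∀ h : i < G.length,
      pdT pd (G.get ⟨i, h⟩) ⊆
        Fs ∪ {b | ∃ j : ℕ, ∃ hj : j < G.length, j < i ∧ G.get ⟨j, hj⟩ = b}) ∧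
  (∀ a ∈ Fs, pdT pd a ⊆ Fs) ∧
  (∀ a ∈ Fs, ∃ b ∈ Fs, a ∈ pdT pd b) ∧
  B = (⋃ a ∈ Fs, pdF pd a) ∪ ⋃ a ∈ {c | c ∈ G}, pdF pd a

namespace ADF
variable (D : ADF α)

/-- `(Fs, G, B)` is a partially acyclic positive dependency evaluation for `x` on `X`. -/
def PAEval (X : Set α) (x : α) (Fs : Set α) (G : List α) (B : Set α) : Prop :=
  ∃ pd, D.MaxSound X pd ∧ IsPAEvalWith pd X x Fs G B

/-- `(G, B)` is an acyclic positive dependency evaluation for `x` on `X`. -/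
def AcyclicEval (X : Set α) (x : α) (G : List α) (B : Set α) : Prop :=
  D.PAEval X x ∅ G B

/-- The standard discarded set `X⁺`. -/
def stdDiscarded (X : Set α) : Set α :=
  {a | ∀ Fs G B, D.PAEval Set.univ a Fs G B → (B ∩ X).Nonempty}

/-- The partially acyclic discarded set `X^{p+}`. -/
def pDiscarded (X : Set α) : Set α :=
  {a | ¬ ∃ Fs G B, D.PAEval Set.univ a Fs G B ∧ Fs ⊆ X ∧ B ∩ X = ∅}

/-- The acyclic discarded set `X^{a+}`. -/
def aDiscarded (X : Set α) : Set α :=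
  {a | ∀ G B, D.AcyclicEval Set.univ a G B → (B ∩ X).Nonempty}

/-- The standard range of `X`. -/
noncomputable def stdRange (X : Set α) : Interp α := mkInterp X (D.stdDiscarded X \ X)

/-- The partially acyclic range of `X`. -/
noncomputable def pRange (X : Set α) : Interp α := mkInterp X (D.pDiscarded X \ X)

/-- The acyclic range of `X`. -/
noncomputable def aRange (X : Set α) : Interp α := mkInterp X (D.aDiscarded X \ X)

/-- Conflict-freeness in an ADF. -/
def ConflictFree (X : Set α) : Prop := ∀ s ∈ X, D.C s (X ∩ D.par s) = true

/-- pd-acyclic conflict-freeness in an ADF. -/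
def PDAcyclicCF (X : Set α) : Prop :=
  ∀ a ∈ X, ∃ G B, D.AcyclicEval X a G B ∧ B ∩ X = ∅

def CCAdmissible (X : Set α) : Prop :=
  D.ConflictFree X ∧ ∀ e ∈ X, D.DecisivelyIn (D.stdRange X) e

def CA2Admissible (X : Set α) : Prop :=
  D.ConflictFree X ∧ ∀ e ∈ X, D.DecisivelyIn (D.pRange X) e

def AAAdmissible (X : Set α) : Prop :=
  D.PDAcyclicCF X ∧ ∀ e ∈ X, D.DecisivelyIn (D.aRange X) e

def CCComplete (X : Set α) : Prop :=
  D.CCAdmissible X ∧ ∀ e, D.DecisivelyIn (D.stdRange X) e → e ∈ X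

def CA2Complete (X : Set α) : Prop :=
  D.CA2Admissible X ∧ ∀ e, D.DecisivelyIn (D.pRange X) e → e ∈ X

def AAComplete (X : Set α) : Prop :=
  D.AAAdmissible X ∧ ∀ e, D.DecisivelyIn (D.aRange X) e → e ∈ X

def CCPreferred (X : Set α) : Prop :=
  D.CCAdmissible X ∧ ∀ Y, D.CCAdmissible Y → X ⊆ Y → X = Y

def CA2Preferred (X : Set α) : Prop :=
  D.CA2Admissible X ∧ ∀ Y, D.CA2Admissible Y → X ⊆ Y → X = Y

def AAPreferred (X : Set α) : Prop :=
  D.AAAdmissible X ∧ ∀ Y, D.AAAdmissible Y → X ⊆ Y → X = Y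

/-- `X` is a model of the ADF. -/
def IsModel (X : Set α) : Prop :=
  D.ConflictFree X ∧ ∀ a, a ∉ X → D.C a (X ∩ D.par a) = false

/-- `X` is a stable extension of the ADF. -/
def IsStable (X : Set α) : Prop :=
  D.PDAcyclicCF X ∧ D.aDiscarded X = Xᶜ

/-- `X` is the grounded extension (the least cc-complete extension). -/
def IsGrounded (X : Set α) : Prop :=
  D.CCComplete X ∧ ∀ Y, D.CCComplete Y → X ⊆ Y

/-- `X` is the acyclic grounded extension (the least aa-complete extension). -/
def IsAcyclicGrounded (X : Set α) : Prop :=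
  D.AAComplete X ∧ ∀ Y, D.AAComplete Y → X ⊆ Y

/-- The link `(r,s)` is supporting. -/
def Supporting (r s : α) : Prop :=
  ¬ ∃ R' ⊆ D.par s, D.C s R' = true ∧ D.C s (R' ∪ {r}) = false

/-- The link `(r,s)` is attacking. -/
def Attacking (r s : α) : Prop :=
  ¬ ∃ R' ⊆ D.par s, D.C s R' = false ∧ D.C s (R' ∪ {r}) = true

/-- Bipolar ADFs. -/
def IsBADF : Prop := ∀ r s, D.L r s → D.Supporting r s ∨ D.Attacking r s

/-- Positive dependency acyclic ADFs (AADF⁺): every partially acyclic evaluation is acyclic. -/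
def IsAADFplus : Prop := ∀ X x Fs G B, D.PAEval X x Fs G B → Fs = ∅

end ADF

/-! ### Frameworks with sets of attacking arguments (SETAFs) -/

/-- A framework with sets of attacking arguments. -/
structure SETAF (α : Type u) where
  R : Set α → α → Prop
  nonempty_of_R : ∀ S a, R S a → S.Nonempty

namespace SETAF

variable (sf : SETAF α)

/-- `X` is conflict-free in the SETAF. -/
def ConflictFree (X : Set α) : Prop := ¬ ∃ S ⊆ X, ∃ a ∈ X, sf.R S a

/-- The discarded set of `X` in the SETAF. -/
def discarded (X : Set α) : Set α := {b | ∃ S ⊆ X, sf.R S b}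

/-- `X` defends `a` in the SETAF. -/
def Defends (X : Set α) (a : α) : Prop :=
  ∀ S, sf.R S a → ∃ s ∈ S, s ∈ sf.discarded X

def Admissible (X : Set α) : Prop := sf.ConflictFree X ∧ ∀ a ∈ X, sf.Defends X a

def Complete (X : Set α) : Prop := sf.Admissible X ∧ ∀ a, sf.Defends X a → a ∈ X

def Preferred (X : Set α) : Prop :=
  sf.Admissible X ∧ ∀ Y, sf.Admissible Y → X ⊆ Y → X = Y

/-- `X` is the grounded extension: the least complete extension. -/
def IsGrounded (X : Set α) : Prop := sf.Complete X ∧ ∀ Y, sf.Complete Y → X ⊆ Y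

def Stable (X : Set α) : Prop := sf.ConflictFree X ∧ sf.discarded X = Xᶜ

/-- The ADF corresponding to a SETAF. -/
noncomputable def toADF : ADF α where
  L x y := ∃ B : Set α, x ∈ B ∧ sf.R B y
  C a B := decide (¬ ∃ S, sf.R S a ∧ S ⊆ B)

end SETAF

/-! ### Extended argumentation frameworks with collective defense attacks (EAFCs) -/

/-- An EAFC: binary attacks `R` and collective defense attacks `D` on attacks. -/
structure EAFC (α : Type u) where
  R : α → α → Prop
  D : Set α → α → α → Prop
  nonempty_of_D : ∀ C a b, D C a b → C.Nonempty
  attack_of_D : ∀ C a b, D C a b → R a b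

namespace EAFC

variable (E : EAFC α)

/-- `a` defeats `b` w.r.t. `X`. -/
def Defeats (X : Set α) (a b : α) : Prop :=
  E.R a b ∧ ¬ ∃ C ⊆ X, E.D C a b

/-- `RS` is a reinstatement set on `X` for the defeat of `b` by `a`. -/
def Reinstatement (X : Set α) (RS : Set (α × α)) (a b : α) : Prop :=
  RS.Finite ∧
  (∀ p ∈ RS, p.1 ∈ X ∧ E.Defeats X p.1 p.2) ∧
  (a, b) ∈ RS ∧
  ∀ p ∈ RS, ∀ C : Set α, E.D C p.1 p.2 → ∃ q ∈ RS, q.2 ∈ C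

/-- The discarded set `X⁺` of `X` in the EAFC. -/
def discarded (X : Set α) : Set α :=
  {b | ∃ a ∈ X, E.Defeats X a b ∧ ∃ RS, E.Reinstatement X RS a b}

/-- `X` defends `a` in the EAFC. -/
def Defends (X : Set α) (a : α) : Prop :=
  ∀ b, E.Defeats X b a → b ∈ E.discarded X

/-- `X` is conflict-free in the EAFC. -/
def ConflictFree (X : Set α) : Prop := ¬ ∃ a ∈ X, ∃ b ∈ X, E.Defeats X a b

def Admissible (X : Set α) : Prop := E.ConflictFree X ∧ ∀ a ∈ X, E.Defends X a

def Complete (X : Set α) : Prop := E.Admissible X ∧ ∀ a, E.Defends X a → a ∈ X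

def Preferred (X : Set α) : Prop :=
  E.Admissible X ∧ ∀ Y, E.Admissible Y → X ⊆ Y → X = Y

def Stable (X : Set α) : Prop :=
  E.ConflictFree X ∧ ∀ b, b ∉ X → ∃ a ∈ X, E.Defeats X a b

/-- The characteristic function of the EAFC. -/
def charFun (X : Set α) : Set α := {a | E.Defends X a}

/-- The grounded extension of the EAFC. -/
def grounded : Set α := ⋃ i : ℕ, E.charFun^[i] ∅

/-- Every argument has finitely many attackers, every attack finitely many defense attackers. -/
def Finitary : Prop :=
  (∀ a, {b | E.R b a}.Finite) ∧ ∀ a b, {C | E.D C a b}.Finite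

/-- Strong consistency of an EAFC. -/
def StronglyConsistent : Prop :=
  ¬ ∃ (x y z : α) (X : Set α), E.R x y ∧ x ∈ X ∧ E.D X z y

/-- The EAFC is bounded hierarchical. -/
def BoundedHierarchical : Prop :=
  ∃ n : ℕ, ∃ hn : 0 < n,
    ∃ (As : Fin n → Set α) (Rs : Fin n → α → α → Prop)
      (Ds : Fin n → Set α → α → α → Prop),
      (∀ C a b, ¬ Ds ⟨n - 1, Nat.sub_lt hn one_pos⟩ C a b) ∧
      (Set.univ = ⋃ i, As i) ∧
      (∀ a b, E.R a b ↔ ∃ i, Rs i a b) ∧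
      (∀ C a b, E.D C a b ↔ ∃ i, Ds i C a b) ∧
      (∀ i a b, Rs i a b → a ∈ As i ∧ b ∈ As i) ∧
      (∀ i C a b, Ds i C a b → Rs i a b ∧
        ∃ h : (i : ℕ) + 1 < n, C ⊆ As ⟨(i : ℕ) + 1, h⟩)

/-- The ADF corresponding to a strongly consistent EAFC. -/
noncomputable def toADF : ADF α where
  L a b := E.R a b ∨ ∃ (c : α) (X : Set α), a ∈ X ∧ E.D X c b
  C a B := decide (¬ ∃ x ∈ B, E.R x a ∧ ¬ ∃ B' ⊆ B, E.D B' x a)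

end EAFC

/-! ### Argumentation frameworks with necessities (AFNs) -/

/-- An AFN: binary attacks `R` and necessity relation `N`. -/
structure AFN (α : Type u) where
  R : α → α → Prop
  N : Set α → α → Prop
  nonempty_of_N : ∀ B a, N B a → B.Nonempty

namespace AFN

variable (fn : AFN α)

/-- `G` is a powerful sequence for `a` on `X`. -/
def PowerfulSeq (X : Set α) (G : List α) (a : α) : Prop :=
  G ≠ [] ∧ (∀ b ∈ G, b ∈ X) ∧ G.getLast? = some a ∧
  ∀ i : ℕ, ∀ h : i < G.length, ∀ B : Set α, fn.N B (G.get ⟨i, h⟩) →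
    ∃ j : ℕ, ∃ hj : j < G.length, j < i ∧ G.get ⟨j, hj⟩ ∈ B

/-- `a` is powerful in `X`. -/
def Powerful (X : Set α) (a : α) : Prop :=
  a ∈ X ∧ ∃ G, fn.PowerfulSeq X G a

/-- `X` is coherent. -/
def Coherent (X : Set α) : Prop := ∀ a ∈ X, fn.Powerful X a

/-- The discarded set `X^att` of `X` in the AFN. -/
def discardedAtt (X : Set α) : Set α :=
  {a | ∀ C, fn.Coherent C → a ∈ C → ∃ c ∈ C, ∃ e ∈ X, fn.R e c}

/-- `X` is conflict-free in the AFN. -/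
def ConflictFree (X : Set α) : Prop := ¬ ∃ a ∈ X, ∃ b ∈ X, fn.R a b

/-- `X` is strongly coherent. -/
def StronglyCoherent (X : Set α) : Prop := fn.ConflictFree X ∧ fn.Coherent X

/-- The deactivated set `X⁺` of `X` in the AFN. -/
def deactivated (X : Set α) : Set α :=
  {a | (∃ e ∈ X, fn.R e a) ∨ ∃ B, fn.N B a ∧ X ∩ B = ∅}

/-- `X` defends `a` in the AFN. -/
def Defends (X : Set α) (a : α) : Prop :=
  fn.Coherent (X ∪ {a}) ∧ ∀ b, fn.R b a → b ∈ fn.discardedAtt X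

def Admissible (X : Set α) : Prop := fn.StronglyCoherent X ∧ ∀ a ∈ X, fn.Defends X a

def Complete (X : Set α) : Prop := fn.Admissible X ∧ ∀ a, fn.Defends X a → a ∈ X

def Preferred (X : Set α) : Prop :=
  fn.Admissible X ∧ ∀ Y, fn.Admissible Y → X ⊆ Y → X = Y

/-- `X` is the grounded extension: the least complete extension. -/
def IsGrounded (X : Set α) : Prop := fn.Complete X ∧ ∀ Y, fn.Complete Y → X ⊆ Y

/-- Stability via completeness and the deactivated set. -/
def Stable (X : Set α) : Prop := fn.Complete X ∧ fn.deactivated X = Xᶜ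

/-- Stability via strong coherence and the discarded set. -/
def StableAtt (X : Set α) : Prop :=
  fn.StronglyCoherent X ∧ fn.discardedAtt X = Xᶜ

/-- Strong consistency of an AFN: no argument is both supported and attacked by
the same argument. -/
def StronglyConsistent : Prop :=
  ∀ a : α, {b | ∃ B, b ∈ B ∧ fn.N B a} ∩ {b | fn.R b a} = ∅

/-- The ADF corresponding to a strongly consistent AFN. -/
noncomputable def toADF : ADF α where
  L x y := fn.R x y ∨ ∃ B, x ∈ B ∧ fn.N B y
  C a P := decide (¬ ((∃ p ∈ P, fn.R p a) ∨ ∃ Z, fn.N Z a ∧ Z ∩ P = ∅))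

end AFN

end Dialectical

/-!
Through the ADF, `a` is decisively in w.r.t. `v` iff every attacker of `a` is f in `v` or has a
defense set inside the t-part of `v`; strong consistency keeps attackers out of those defense
sets. For the partially acyclic range of `X` this reduces the theorem to `X^{p+} \ X = X⁺`.

An argument discarded by a reinstatement set cannot end a partially acyclic evaluation avoiding
`X`: the first evaluated argument that is a target of the reinstatement set would need an
attacker from `X` in its f-part, or a target of the reinstatement set in its t-part.
Conversely, an argument outside `X ∪ X⁺` is reached by finitely many rounds of "every attack
from `X` has a defense set inside `X` or earlier rounds". Choosing the pd-interpretations along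
these rounds, every positive cycle below the argument lies in `X`, so the cyclic part of the
evaluation built from them stays inside `X`.
-/

theorem List.Pairwise.exists_lt_of_rel {β : Type*} {r : β → β → Prop} {l : List β}
    (hl : l.Pairwise fun a c => ¬ r c a) {i : ℕ} (hi : i < l.length) {u : β} (hu : u ∈ l)
    (hr : r u l[i]) (hirr : ¬ r u u) : ∃ j, ∃ hj : j < l.length, j < i ∧ l[j] = u := by
  obtain ⟨j, hj, rfl⟩ := List.mem_iff_getElem.1 hu
  refine ⟨j, hj, ?_, rfl⟩
  rcases lt_trichotomy j i with hji | rfl | hij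
  · exact hji
  · exact absurd hr hirr
  · exact absurd hr (List.pairwise_iff_getElem.1 hl i j hi hj hij)

theorem exists_list_pairwise_not_rel {β : Type*} [Finite β] (r : β → β → Prop) (S : Set β)
    (hS : ∀ u ∈ S, ¬ Relation.TransGen r u u) :
    ∃ l : List β, l.Nodup ∧ (∀ u, u ∈ l ↔ u ∈ S) ∧ l.Pairwise fun a c => ¬ r c a := by
  -- on `S`, `r` strictly increases the number of strict ancestors, so sorting by it works
  let rank : β → ℕ := fun u => {c | Relation.TransGen r c u}.ncard
  have hrank : ∀ c ∈ S, ∀ a, r c a → rank c < rank a := fun c hc a hca =>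
    Set.ncard_lt_ncard ⟨fun d hd => hd.tail hca, fun hsub => hS c hc (hsub (.single hca))⟩
  let l := (Set.toFinite S).toFinset.toList.mergeSort fun a c => decide (rank a ≤ rank c)
  have hperm : l.Perm (Set.toFinite S).toFinset.toList := List.mergeSort_perm _ _
  refine ⟨l, hperm.nodup_iff.2 (Finset.nodup_toList _), fun u => by simp [hperm.mem_iff], ?_⟩
  refine (List.pairwise_mergeSort (fun a b c hab hbc => ?_) (fun a c => ?_) _).imp_of_mem ?_
  · simp only [decide_eq_true_eq] at hab hbc ⊢
    exact hab.trans hbc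
  · simpa using le_total (rank a) (rank c)
  · intro a c _ hc hac hca
    have hcS : c ∈ S := by simpa [hperm.mem_iff] using hc
    simp only [decide_eq_true_eq] at hac
    exact absurd hac (not_le.2 (hrank c hcS a hca))

theorem exists_list_pairwise_not_rel_getLast {β : Type*} [Finite β] (r : β → β → Prop)
    (S : Set β) {b : β} (hbS : b ∈ S) (hS : ∀ u ∈ S, ¬ Relation.TransGen r u u)
    (hb : ∀ u ∈ S, ¬ r b u) :
    ∃ l : List β, l.Nodup ∧ (∀ u, u ∈ l ↔ u ∈ S) ∧ (l.Pairwise fun a c => ¬ r c a) ∧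
      l.getLast? = some b := by
  obtain ⟨l, hnd, hmem, hpw⟩ := exists_list_pairwise_not_rel r (S \ {b}) fun u hu => hS u hu.1
  refine ⟨l ++ [b], hnd.append (List.nodup_singleton b) (by simp [hmem]), fun u => ?_,
    List.pairwise_append.2 ⟨hpw, List.pairwise_singleton _ _, ?_⟩, List.getLast?_concat⟩
  · by_cases hub : u = b
    · simp [hub, hbS]
    · simp [hmem, hub]
  · intro a ha c hc
    rw [List.mem_singleton.1 hc]
    exact hb a ((hmem a).1 ha).1

theorem Relation.TransGen.mem_or_lt {β : Type*} {r : β → β → Prop} {X W : Set β} {m : β → ℕ}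
    (hX : ∀ z ∈ X, ∀ u, r u z → u ∈ X)
    (hW : ∀ z ∈ W, z ∉ X → ∀ u, r u z → u ∈ X ∨ (u ∈ W ∧ m u < m z))
    {u z : β} (h : Relation.TransGen r u z) (hz : z ∈ W) (hzX : z ∉ X) :
    u ∈ X ∨ (u ∈ W ∧ m u < m z) := by
  induction h using Relation.TransGen.head_induction_on with
  | single huz => exact hW z hz hzX _ huz
  | @head u c huc _ ih =>
    by_cases hcX : c ∈ X
    · exact Or.inl (hX c hcX u huc)
    · obtain ⟨hcW, hcz⟩ := ih.resolve_left hcX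
      exact (hW c hcW hcX u huc).imp_right fun ⟨huW, huc⟩ => ⟨huW, huc.trans hcz⟩

namespace Dialectical

variable {α : Type*}

section Interp

variable {v w : Interp α} {T F Z : Set α}

theorem tset_mkInterp (T F : Set α) : tset (mkInterp T F) = T := by
  ext a
  by_cases ha : a ∈ T <;> simp [tset, mkInterp, ha]

theorem fset_mkInterp (T F : Set α) : fset (mkInterp T F) = F \ T := by
  ext a
  by_cases ha : a ∈ T <;> by_cases hb : a ∈ F <;> simp [fset, mkInterp, ha, hb]

theorem idom_mkInterp (T F : Set α) : idom (mkInterp T F) = T ∪ F := by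
  ext a
  by_cases ha : a ∈ T <;> by_cases hb : a ∈ F <;> simp [idom, mkInterp, ha, hb]

theorem idom_eq_tset_union_fset (v : Interp α) : idom v = tset v ∪ fset v := by
  ext a
  rcases h : v a with _ | _ | _ <;> simp [idom, tset, fset, h]

theorem disjoint_tset_fset (v : Interp α) : Disjoint (tset v) (fset v) :=
  Set.disjoint_left.2 fun a ht hf => by simp_all [tset, fset]

theorem Completion.tset_subset (hw : Completion v w Z) : tset v ⊆ tset w := fun a ha =>
  (hw.2 a (by simp_all [idom, tset])).trans ha

theorem Completion.fset_subset (hw : Completion v w Z) : fset v ⊆ fset w := fun a ha =>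
  (hw.2 a (by simp_all [idom, fset])).trans ha

theorem completion_mkInterp (hT : tset v ⊆ T) (hF : fset v ⊆ F) (hTF : Disjoint T (fset v)) :
    Completion v (mkInterp T F) (T ∪ F) := by
  refine ⟨idom_mkInterp T F, fun a ha => ?_⟩
  rcases (idom_eq_tset_union_fset v ▸ ha : a ∈ tset v ∪ fset v) with hat | haf
  · simp only [mkInterp, if_pos (hT hat)]
    exact hat.symm
  · simp only [mkInterp, if_neg (Set.disjoint_right.1 hTF haf), if_pos (hF haf)]
    exact haf.symm

end Interp

section PDFunction

variable {pd : α → Option (Interp α)} {a : α} {v : Interp α}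

theorem pdT_of_eq_some (h : pd a = some v) : pdT pd a = tset v := by
  simp [pdT, h]

theorem pdF_of_eq_some (h : pd a = some v) : pdF pd a = fset v := by
  simp [pdF, h]

def PosDep (pd : α → Option (Interp α)) (u z : α) : Prop := u ∈ pdT pd z

end PDFunction

namespace ADF

variable (D : ADF α)

theorem exists_minDecIn_le [Finite α] {v : Interp α} {s : α} (hv : D.DecisivelyIn v s) :
    ∃ w, D.MinDecIn w s ∧ tset w ⊆ tset v ∧ fset w ⊆ fset v := by
  obtain ⟨w, ⟨hw, hwt, hwf⟩, hmin⟩ :=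
    (InvImage.wf (fun w : Interp α => (tset w, fset w)) wellFounded_lt).has_min
      {w | D.DecisivelyIn w s ∧ tset w ⊆ tset v ∧ fset w ⊆ fset v} ⟨v, hv, le_rfl, le_rfl⟩
  refine ⟨w, ⟨hw, fun w' hw' ht hf => ?_⟩, hwt, hwf⟩
  have := eq_of_le_of_not_lt (show (tset w', fset w') ≤ (tset w, fset w) from ⟨ht, hf⟩)
    (hmin w' ⟨hw', ht.trans hwt, hf.trans hwf⟩)
  simpa using this

theorem maxSound_univ_of_pdFun {pd : α → Option (Interp α)} (hpd : D.PDFun Set.univ pd) :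
    D.MaxSound Set.univ pd := by
  refine ⟨hpd, ?_⟩
  rintro ⟨X'', pd', hpd', hsound, hlt, -, -⟩
  obtain ⟨a, ha, hna⟩ := Set.exists_of_ssubset hlt
  obtain ⟨v, hv⟩ := Option.ne_none_iff_exists'.1 (hsound a ha)
  exact (hpd a trivial).2 (by_contra fun hne => hna ⟨trivial, hne⟩)
    ⟨v, ((hpd' a ha).1 v hv).1, Set.subset_univ _⟩

theorem exists_maxSound_univ (P : α → Interp α → Prop) :
    ∃ pd, D.MaxSound Set.univ pd ∧
      ∀ a, (∃ v, D.MinDecIn v a ∧ P a v) → ∃ v, pd a = some v ∧ P a v := by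
  let pd : α → Option (Interp α) := fun a =>
    if h : ∃ v, D.MinDecIn v a ∧ P a v then some h.choose
    else if h' : ∃ v, D.MinDecIn v a then some h'.choose else none
  refine ⟨pd, D.maxSound_univ_of_pdFun fun a _ => ⟨fun v hv => ⟨?_, Set.subset_univ _⟩, ?_⟩,
    fun a h => ⟨h.choose, by simp [pd, h], h.choose_spec.2⟩⟩
  · simp only [pd] at hv
    split_ifs at hv with h h'
    · exact Option.some.inj hv ▸ h.choose_spec.1
    · exact Option.some.inj hv ▸ h'.choose_spec
  · intro ha ⟨v, hv, _⟩
    simp only [pd] at ha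
    split_ifs at ha with h h'
    exact h' ⟨v, hv⟩

end ADF

section Evaluation

variable {pd : α → Option (Interp α)}

theorem IsPAEvalWith.not_mem {Y Fs B : Set α} {x : α} {G : List α}
    (hev : IsPAEvalWith pd Y x Fs G B) {S : Set α} (hSFs : Disjoint S Fs)
    (hS : ∀ y ∈ G, y ∈ S → ∃ u ∈ pdT pd y, u ∈ S) : x ∉ S := by
  obtain ⟨-, -, -, -, -, -, -, hnil, hlast, hord, -⟩ := hev
  have hG : ∀ i (hi : i < G.length), G[i] ∉ S := by
    intro i
    induction i using Nat.strong_induction_on with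
    | _ i ih =>
      intro hi hiS
      obtain ⟨u, hu, huS⟩ := hS _ (List.getElem_mem hi) hiS
      rcases hord i hi (by simpa using hu) with huFs | ⟨j, hj, hji, rfl⟩
      · exact Set.disjoint_left.1 hSFs huS huFs
      · exact ih j hji hj (by simpa using huS)
  intro hxS
  by_cases hGnil : G = []
  · exact Set.disjoint_left.1 hSFs hxS (hnil hGnil)
  · obtain ⟨i, hi, rfl⟩ := List.mem_iff_getElem.1 (List.mem_of_getLast? (hlast hGnil))
    exact hG i hi hxS

open Relation in
/-- The cyclic part `Fs` consists of the ancestors of the `pd`-cycles below `b`; the remaining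
ancestors of `b` are listed in a topological order, ending with `b`. -/
theorem exists_isPAEvalWith [Finite α] {X : Set α} {b : α} (hb : b ∉ X)
    (hX : ∀ z ∈ X, pdT pd z ⊆ X)
    (hsome : ∀ z, ReflTransGen (PosDep pd) z b → pd z ≠ none)
    (hF : ∀ z, ReflTransGen (PosDep pd) z b → Disjoint (pdF pd z) X)
    (hcyc : ∀ z, ReflTransGen (PosDep pd) z b → TransGen (PosDep pd) z z → z ∈ X) :
    ∃ Fs G B, IsPAEvalWith pd Set.univ b Fs G B ∧ Fs ⊆ X ∧ Disjoint B X := by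
  set r := PosDep pd
  let Fs : Set α := {u | ∃ c, TransGen r c c ∧ ReflTransGen r u c ∧ ReflTransGen r c b}
  have hFs_reach : ∀ u ∈ Fs, ReflTransGen r u b := fun u ⟨_, _, huc, hcb⟩ => huc.trans hcb
  have hcyc_Fs : ∀ u, ReflTransGen r u b → TransGen r u u → u ∈ Fs :=
    fun u hu huu => ⟨u, huu, .refl, hu⟩
  have hbFs : b ∉ Fs := fun ⟨_, hcc, hbc, hcb⟩ =>
    hb (hcyc b .refl ((TransGen.trans_right hbc hcc).trans_left hcb))
  have hFsX : Fs ⊆ X := by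
    rintro u ⟨c, hcc, huc, hcb⟩
    have hcX := hcyc c hcb hcc
    induction huc using ReflTransGen.head_induction_on with
    | refl => exact hcX
    | head hua _ ih => exact hX _ ih hua
  obtain ⟨G, hGnd, hGmem, hGpw, hGlast⟩ := exists_list_pairwise_not_rel_getLast r
    {u | ReflTransGen r u b ∧ u ∉ Fs} ⟨.refl, hbFs⟩
    (fun u hu huu => hu.2 (hcyc_Fs u hu.1 huu))
    fun u hu hbu => hbFs (hcyc_Fs b .refl (.head' hbu hu.1))
  refine ⟨Fs, G, _, ⟨fun a ha => ((hGmem a).1 ha).2, hGnd, trivial, Set.subset_univ _,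
    fun _ _ => trivial, fun a ha => hsome a (hFs_reach a ha),
    fun a ha => hsome a ((hGmem a).1 ha).1, fun hG => by simp [hG] at hGlast, fun _ => hGlast,
    ?_, ?_, ?_, rfl⟩, hFsX, ?_⟩
  · intro i hi u hu
    simp only [List.get_eq_getElem] at hu ⊢
    have hub : ReflTransGen r u b := .head hu ((hGmem _).1 (List.getElem_mem hi)).1
    by_cases huFs : u ∈ Fs
    · exact Or.inl huFs
    · exact Or.inr (hGpw.exists_lt_of_rel hi ((hGmem u).2 ⟨hub, huFs⟩) hu
        fun huu => huFs (hcyc_Fs u hub (.single huu)))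
  · rintro a ⟨c, hcc, hac, hcb⟩ u hu
    exact ⟨c, hcc, .head hu hac, hcb⟩
  · rintro a ⟨c, hcc, hac, hcb⟩
    obtain ⟨a', haa', ha'c⟩ := TransGen.head'_iff.1 (TransGen.trans_right hac hcc)
    exact ⟨a', ⟨c, hcc, ha'c, hcb⟩, haa'⟩
  · exact Disjoint.union_left (Set.disjoint_iUnion₂_left.2 fun a ha => hF a (hFs_reach a ha))
      (Set.disjoint_iUnion₂_left.2 fun a ha => hF a ((hGmem a).1 ha).1)

end Evaluation

namespace EAFC

variable (E : EAFC α)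

theorem StronglyConsistent.not_mem {E : EAFC α} (h : E.StronglyConsistent) {x y z : α}
    {C : Set α} (hR : E.R x y) (hD : E.D C z y) : x ∉ C :=
  fun hx => h ⟨x, y, z, C, hR, hx, hD⟩

theorem mem_par_toADF_of_R {x a : α} (h : E.R x a) : x ∈ E.toADF.par a := Or.inl h

theorem subset_par_toADF_of_D {C : Set α} {x a : α} (h : E.D C x a) : C ⊆ E.toADF.par a :=
  fun _ hc => Or.inr ⟨x, C, hc, h⟩

theorem toADF_C_eq_true_iff (a : α) (B : Set α) :
    E.toADF.C a B = true ↔ ∀ x ∈ B, E.R x a → ∃ B' ⊆ B, E.D B' x a := by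
  simp [toADF]

theorem decisivelyIn_toADF_iff (h : E.StronglyConsistent) (v : Interp α) (a : α) :
    E.toADF.DecisivelyIn v a ↔ ∀ x, E.R x a → x ∈ fset v ∨ ∃ C ⊆ tset v, E.D C x a := by
  constructor
  · intro hv x hx
    by_contra! ⟨hxf, hC⟩
    have hxpar := E.mem_par_toADF_of_R hx
    have hZ : insert x (tset v) ∪ (fset v ∪ E.toADF.par a) = idom v ∪ E.toADF.par a := by
      rw [Set.insert_union, Set.insert_eq_of_mem (by exact Or.inr (Or.inr hxpar)),
        ← Set.union_assoc, idom_eq_tset_union_fset]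
    -- complete `v` by setting `x` to t and every other undecided parent of `a` to f
    have hw := hZ ▸ completion_mkInterp (Set.subset_insert x _) Set.subset_union_left
      (Set.disjoint_insert_left.2 ⟨hxf, disjoint_tset_fset v⟩)
    have hin := hv _ hw
    rw [ADF.evalCond, tset_mkInterp, toADF_C_eq_true_iff] at hin
    obtain ⟨B', hB', hD⟩ := hin x ⟨Set.mem_insert x _, hxpar⟩ hx
    refine hC B' (fun c hc => ((hB' hc).1.resolve_left ?_)) hD
    rintro rfl
    exact h.not_mem hx hD hc
  · intro hv w hw
    rw [ADF.evalCond, toADF_C_eq_true_iff]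
    rintro x ⟨hxw, -⟩ hx
    rcases hv x hx with hxf | ⟨C, hC, hD⟩
    · exact absurd (hw.fset_subset hxf) (Set.disjoint_left.1 (disjoint_tset_fset w) hxw)
    · exact ⟨C, Set.subset_inter (hC.trans hw.tset_subset) (E.subset_par_toADF_of_D hD), hD⟩

theorem exists_minDecIn_toADF [Finite α] (h : E.StronglyConsistent) {X T : Set α} {z : α}
    (hdef : ∀ x ∈ X, E.R x z → ∃ C ⊆ T, E.D C x z) :
    ∃ w, E.toADF.MinDecIn w z ∧ tset w ⊆ T ∧ Disjoint (fset w) X := by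
  let att := {x | E.R x z}
  have hdec : E.toADF.DecisivelyIn (mkInterp (T \ att) (att \ X)) z := by
    rw [decisivelyIn_toADF_iff E h, tset_mkInterp, fset_mkInterp]
    intro x hx
    by_cases hxX : x ∈ X
    · obtain ⟨C, hCT, hD⟩ := hdef x hxX hx
      exact Or.inr ⟨C, fun c hc => ⟨hCT hc, fun hcz => h.not_mem hcz hD hc⟩, hD⟩
    · exact Or.inl ⟨⟨hx, hxX⟩, fun hx' => hx'.2 hx⟩
  obtain ⟨w, hw, ht, hf⟩ := E.toADF.exists_minDecIn_le hdec
  rw [tset_mkInterp] at ht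
  rw [fset_mkInterp] at hf
  exact ⟨w, hw, ht.trans Set.sdiff_subset, Set.disjoint_left.2 fun c hc hcX => (hf hc).1.2 hcX⟩

theorem discarded_subset_pDiscarded (h : E.StronglyConsistent) {X : Set α}
    (hcf : E.ConflictFree X) : E.discarded X ⊆ E.toADF.pDiscarded X := by
  rintro b ⟨a, -, -, RS, -, hRS, hab, hreinst⟩ ⟨Fs, G, B, ⟨pd, hpd, hev⟩, hFsX, hBX⟩
  refine hev.not_mem (S := Prod.snd '' RS) ?_ ?_ ⟨(a, b), hab, rfl⟩
  · refine Set.disjoint_left.2 ?_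
    rintro _ ⟨q, hq, rfl⟩ hqFs
    exact hcf ⟨q.1, (hRS q hq).1, q.2, hFsX hqFs, (hRS q hq).2⟩
  · obtain ⟨-, -, -, -, -, -, hGpd, -, -, -, -, -, rfl⟩ := id hev
    rintro y hyG ⟨q, hq, rfl⟩
    obtain ⟨v, hv⟩ := Option.ne_none_iff_exists'.1 (hGpd _ hyG)
    have hdec := ((hpd.1 q.2 trivial).1 v hv).1.1
    rcases (E.decisivelyIn_toADF_iff h v q.2).1 hdec q.1 (hRS q hq).2.1 with hf | ⟨C, hC, hD⟩
    · refine absurd hBX (Set.nonempty_iff_ne_empty.1 ⟨q.1, Or.inr ?_, (hRS q hq).1⟩)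
      exact Set.mem_biUnion hyG (by rwa [pdF_of_eq_some hv])
    · obtain ⟨q', hq', hq'C⟩ := hreinst q hq C hD
      exact ⟨q'.2, by rw [pdT_of_eq_some hv]; exact hC hq'C, q', hq', rfl⟩

def shieldStep (X S : Set α) : Set α := {y | ∀ x ∈ X, E.R x y → ∃ C ⊆ X ∪ S, E.D C x y}

def shieldedAt (X : Set α) (n : ℕ) : Set α := (E.shieldStep X)^[n] ∅

def shielded (X : Set α) : Set α := ⋃ n, E.shieldedAt X n

noncomputable def shieldRank (X : Set α) (z : α) : ℕ := sInf {n | z ∈ E.shieldedAt X n}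

def shieldedBelow (X : Set α) (z : α) : Set α :=
  {u ∈ E.shielded X | E.shieldRank X u < E.shieldRank X z}

theorem shieldStep_mono (X : Set α) : Monotone (E.shieldStep X) := fun _ _ hST _ hy x hx hR =>
  (hy x hx hR).imp fun _ ⟨hC, hD⟩ => ⟨hC.trans (Set.union_subset_union_right X hST), hD⟩

theorem shieldedAt_mono (X : Set α) : Monotone (E.shieldedAt X) :=
  (E.shieldStep_mono X).monotone_iterate_of_le_map (Set.empty_subset _)

theorem shieldStep_shielded_subset [Finite α] (X : Set α) :
    E.shieldStep X (E.shielded X) ⊆ E.shielded X := by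
  obtain ⟨N, hN⟩ := WellFoundedGT.monotone_chain_condition ⟨E.shieldedAt X, E.shieldedAt_mono X⟩
  have hlim : E.shielded X = E.shieldedAt X N :=
    (Set.iUnion_subset fun n => (le_total n N).elim (fun h => E.shieldedAt_mono X h)
      fun h => (hN n h).ge).antisymm (Set.subset_iUnion _ N)
  have hstable : E.shieldedAt X (N + 1) = E.shieldedAt X N := (hN (N + 1) N.le_succ).symm
  rw [hlim]
  exact (Function.iterate_succ_apply' _ N ∅).ge.trans hstable.le

/-- Unless `y` lies in a pre-fixed point `P` of `shieldStep`, some attack from `X` on `y` has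
every defense set leaving `X ∪ P`; such attacks, together with all reinstatement sets, form a
reinstatement set that discards `y`. -/
theorem compl_discarded_subset [Finite α] {X P : Set α} (hP : E.shieldStep X P ⊆ P) :
    (E.discarded X)ᶜ ⊆ P := by
  let Att : Set (α × α) :=
    {p | p.1 ∈ X ∧ E.R p.1 p.2 ∧ p.2 ∉ P ∧ ∀ C, E.D C p.1 p.2 → ¬ C ⊆ X ∪ P}
  have hAtt : ∀ y ∉ P, ∃ x, (x, y) ∈ Att := by
    intro y hy
    obtain ⟨x, hx, hR, hC⟩ : ∃ x ∈ X, E.R x y ∧ ∀ C ⊆ X ∪ P, ¬ E.D C x y := by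
      simpa [shieldStep] using fun hy' => hy (hP hy')
    exact ⟨x, hx, hR, hy, fun C hD hCsub => hC C hCsub hD⟩
  let U : Set (α × α) := {p | ∃ RS a b, E.Reinstatement X RS a b ∧ p ∈ RS}
  have hpairs : ∀ p ∈ U ∪ Att, p.1 ∈ X ∧ E.Defeats X p.1 p.2 := by
    rintro p (⟨RS, a, b, ⟨-, hRS, -⟩, hp⟩ | ⟨hpX, hR, -, hC⟩)
    · exact hRS p hp
    · exact ⟨hpX, hR, fun ⟨C, hCX, hD⟩ => hC C hD (hCX.trans Set.subset_union_left)⟩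
  have hclosed : ∀ p ∈ U ∪ Att, ∀ C, E.D C p.1 p.2 → ∃ q ∈ U ∪ Att, q.2 ∈ C := by
    rintro p (⟨RS, a, b, hRS, hp⟩ | ⟨-, -, -, hC⟩) C hD
    · obtain ⟨q, hq, hqC⟩ := hRS.2.2.2 p hp C hD
      exact ⟨q, Or.inl ⟨RS, a, b, hRS, hq⟩, hqC⟩
    · obtain ⟨c, hcC, hc⟩ := Set.not_subset.1 (hC C hD)
      by_cases hcd : c ∈ E.discarded X
      · obtain ⟨a, -, -, RS, hRS⟩ := hcd
        exact ⟨(a, c), Or.inl ⟨RS, a, c, hRS, hRS.2.2.1⟩, hcC⟩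
      · obtain ⟨x, hx⟩ := hAtt c fun hcP => hc (Or.inr hcP)
        exact ⟨(x, c), Or.inr hx, hcC⟩
  intro y hy
  by_contra hyP
  obtain ⟨x, hxy⟩ := hAtt y hyP
  exact hy ⟨x, hxy.1, (hpairs _ (Or.inr hxy)).2, U ∪ Att, Set.toFinite _, hpairs, Or.inr hxy,
    hclosed⟩

theorem exists_D_subset_of_mem_shielded {X : Set α} {z : α} (hz : z ∈ E.shielded X) {x : α}
    (hx : x ∈ X) (hR : E.R x z) : ∃ C ⊆ X ∪ E.shieldedBelow X z, E.D C x z := by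
  have hmem : z ∈ E.shieldedAt X (E.shieldRank X z) := Nat.sInf_mem (Set.mem_iUnion.1 hz)
  obtain ⟨n, hn⟩ : ∃ n, E.shieldRank X z = n + 1 :=
    Nat.exists_eq_add_one.2 (Nat.pos_of_ne_zero fun h0 => by rw [h0] at hmem; exact hmem)
  rw [hn, shieldedAt, Function.iterate_succ_apply'] at hmem
  obtain ⟨C, hC, hD⟩ := hmem x hx hR
  exact ⟨C, fun c hc => (hC hc).imp_right fun hc' =>
    ⟨Set.mem_iUnion.2 ⟨n, hc'⟩, hn ▸ Nat.lt_succ_of_le (Nat.sInf_le hc')⟩, hD⟩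

theorem exists_maxSound_pd_descending [Finite α] (h : E.StronglyConsistent) {X : Set α}
    (hcf : E.ConflictFree X) :
    ∃ pd, E.toADF.MaxSound Set.univ pd ∧
      (∀ z ∈ X ∪ E.shielded X, pd z ≠ none ∧ Disjoint (pdF pd z) X) ∧
      (∀ z ∈ X, pdT pd z ⊆ X) ∧
      ∀ z ∈ E.shielded X,
        pdT pd z ⊆ X ∪ E.shieldedBelow X z := by
  let T : α → Set α := fun z =>
    if z ∈ X then X else X ∪ E.shieldedBelow X z
  have hT : ∀ z, T z ⊆ X ∪ E.shieldedBelow X z := by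
    intro z
    by_cases hz : z ∈ X
    · simp only [T, if_pos hz, Set.subset_union_left]
    · simp only [T, if_neg hz, subset_rfl]
  have hdef : ∀ z ∈ X ∪ E.shielded X, ∀ x ∈ X, E.R x z → ∃ C ⊆ T z, E.D C x z := by
    intro z hz x hx hR
    by_cases hzX : z ∈ X
    · simp only [T, if_pos hzX]
      by_contra hC
      exact hcf ⟨x, hx, z, hzX, hR, hC⟩
    · simp only [T, if_neg hzX]
      exact E.exists_D_subset_of_mem_shielded (hz.resolve_left hzX) hx hR
  obtain ⟨pd, hpd, hP⟩ := E.toADF.exists_maxSound_univ fun z v =>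
    tset v ⊆ T z ∧ Disjoint (fset v) X
  have hex : ∀ z ∈ X ∪ E.shielded X, ∃ v, pd z = some v ∧ tset v ⊆ T z ∧ Disjoint (fset v) X :=
    fun z hz => hP z (E.exists_minDecIn_toADF h (hdef z hz))
  refine ⟨pd, hpd, fun z hz => ?_, fun z hz => ?_, fun z hz => ?_⟩
  · obtain ⟨v, hv, -, hf⟩ := hex z hz
    exact ⟨by simp [hv], by rwa [pdF_of_eq_some hv]⟩
  · obtain ⟨v, hv, ht, -⟩ := hex z (Or.inl hz)
    simpa [pdT_of_eq_some hv, T, hz] using ht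
  · obtain ⟨v, hv, ht, -⟩ := hex z (Or.inr hz)
    rw [pdT_of_eq_some hv]
    exact ht.trans (hT z)

open Relation in
theorem pDiscarded_diff_subset_discarded [Finite α] (h : E.StronglyConsistent) {X : Set α}
    (hcf : E.ConflictFree X) : E.toADF.pDiscarded X \ X ⊆ E.discarded X := by
  rintro b ⟨hbp, hbX⟩
  by_contra hbd
  obtain ⟨pd, hpd, hsome, hX, hW⟩ := E.exists_maxSound_pd_descending h hcf
  have hbW : b ∈ E.shielded X := E.compl_discarded_subset (E.shieldStep_shielded_subset X) hbd
  have hdesc : ∀ {u z}, TransGen (PosDep pd) u z → z ∈ E.shielded X → z ∉ X →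
      u ∈ X ∨ (u ∈ E.shielded X ∧ E.shieldRank X u < E.shieldRank X z) :=
    fun huz => huz.mem_or_lt hX fun z hz _ _ hu => hW z hz hu
  have hreach : ∀ z, ReflTransGen (PosDep pd) z b → z ∈ X ∪ E.shielded X := by
    intro z hz
    rcases reflTransGen_iff_eq_or_transGen.1 hz with rfl | hz
    · exact Or.inr hbW
    · exact (hdesc hz hbW hbX).imp_right And.left
  obtain ⟨Fs, G, B, hev, hFsX, hBX⟩ := exists_isPAEvalWith hbX hX
    (fun z hz => (hsome z (hreach z hz)).1) (fun z hz => (hsome z (hreach z hz)).2)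
    fun z hz hzz => by
      by_contra hzX
      rcases hdesc hzz ((hreach z hz).resolve_left hzX) hzX with hz' | ⟨-, hlt⟩
      exacts [hzX hz', lt_irrefl _ hlt]
  exact hbp ⟨Fs, G, B, ⟨pd, hpd, hev⟩, hFsX, Set.disjoint_iff_inter_eq_empty.1 hBX⟩

theorem pDiscarded_diff_eq_discarded [Finite α] (h : E.StronglyConsistent) {X : Set α}
    (hcf : E.ConflictFree X) : E.toADF.pDiscarded X \ X = E.discarded X :=
  (E.pDiscarded_diff_subset_discarded h hcf).antisymm fun _ hb =>
    ⟨E.discarded_subset_pDiscarded h hcf hb, fun hbX =>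
      let ⟨a, haX, hdef, _⟩ := hb
      hcf ⟨a, haX, _, hbX, hdef⟩⟩

end EAFC

end Dialectical

open Dialectical in
/-- a conflict-free set defends `a` in a strongly consistent EAFC iff `a`
is decisively in w.r.t. the partially acyclic range of `X` in the corresponding ADF. -/
theorem eafc_toADF_defends_iff_decisivelyIn
    {α : Type} [Fintype α] (E : EAFC α) (h : E.StronglyConsistent)
    (X : Set α) (hcf : E.ConflictFree X) (a : α) :
    E.Defends X a ↔ E.toADF.DecisivelyIn (E.toADF.pRange X) a := by
  rw [EAFC.decisivelyIn_toADF_iff E h, ADF.pRange, tset_mkInterp, fset_mkInterp, sdiff_idem,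
    E.pDiscarded_diff_eq_discarded h hcf]
  refine ⟨fun hdef x hx => ?_, fun hdec x ⟨hx, hC⟩ => (hdec x hx).resolve_right hC⟩
  by_cases hC : ∃ C ⊆ X, E.D C x a
  exacts [Or.inr hC, Or.inl (hdef x ⟨hx, hC⟩)]
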